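/- Let L > 0 and let C_a > 0, γ > 0, c, B₀ be real parameters, and let φ : ℝ → ℝ be twice continuously differentiable. Suppose h, s, μ, f : ℝ × ℝ → ℝ are smooth functions such that for all t and all x ∈ [0,L]: (i) ∂ₜh = (1/3)∂ₓ(h³ ∂ₓμ); (ii) μ = φ'(h) − (B₀/C_a)(h+s) − (1/C_a)∂ₓₓ(h+s); (iii) ∂ₜs = c² ∂ₓₓ s + (γ/C_a)(∂ₓₓ h + B₀ h) + f; and for all t, ∂ₓh = ∂ₓμ = ∂ₓs = 0 at x = 0 and x = L. Define the free energy E(t) = ∫₀ᴸ [ φ(h) − (B₀/(2C_a)) h² + (1/(2C_a)) (∂ₓh)² + (c²/(2γ)) (∂ₓs)² + (1/C_a)(∂ₓh · ∂ₓs − B₀ h s) ] dx. Then for all t, dE/dt = −(1/3)∫₀ᴸ h³ (∂ₓμ)² dx − (1/γ)∫₀ᴸ (∂ₜs)² dx + (1/γ)∫₀ᴸ f · ∂ₜs dx. -/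

import Mathlib

open MeasureTheory intervalIntegral

/-- Partial derivative in the first (spatial) variable. -/
noncomputable def pdx (u : ℝ × ℝ → ℝ) (x t : ℝ) : ℝ := deriv (fun y => u (y, t)) x

/-- Partial derivative in the second (time) variable. -/
noncomputable def pdt (u : ℝ × ℝ → ℝ) (x t : ℝ) : ℝ := deriv (fun τ => u (x, τ)) t

/-- Second partial derivative in the spatial variable. -/
noncomputable def pdxx (u : ℝ × ℝ → ℝ) (x t : ℝ) : ℝ := deriv (fun y => pdx u y t) x

/-- The total free energy of the thin-film / flexible-substrate system. -/
noncomputable def energy (L Ca γ c B0 : ℝ) (φ : ℝ → ℝ) (h s : ℝ × ℝ → ℝ) (τ : ℝ) : ℝ :=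
  ∫ x in (0:ℝ)..L,
    (φ (h (x, τ)) - (B0 / (2 * Ca)) * (h (x, τ))^2 + (1 / (2 * Ca)) * (pdx h x τ)^2
      + (c^2 / (2 * γ)) * (pdx s x τ)^2
      + (1 / Ca) * (pdx h x τ * pdx s x τ - B0 * h (x, τ) * s (x, τ)))

set_option linter.unusedTactic false
set_option linter.unreachableTactic false

noncomputable def D1 (u : ℝ × ℝ → ℝ) (p : ℝ × ℝ) : ℝ := fderiv ℝ u p (1, 0)
noncomputable def D2 (u : ℝ × ℝ → ℝ) (p : ℝ × ℝ) : ℝ := fderiv ℝ u p (0, 1)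

lemma contDiff_D1 {u : ℝ × ℝ → ℝ} (hu : ContDiff ℝ (⊤ : ℕ∞) u) : ContDiff ℝ (⊤ : ℕ∞) (D1 u) :=
  (hu.fderiv_right (by simp)).clm_apply contDiff_const

lemma contDiff_D2 {u : ℝ × ℝ → ℝ} (hu : ContDiff ℝ (⊤ : ℕ∞) u) : ContDiff ℝ (⊤ : ℕ∞) (D2 u) :=
  (hu.fderiv_right (by simp)).clm_apply contDiff_const

lemma hasDerivAt_slice1 {u : ℝ × ℝ → ℝ} (hu : ContDiff ℝ (⊤ : ℕ∞) u) (x t : ℝ) :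
    HasDerivAt (fun y => u (y, t)) (D1 u (x, t)) x := by
  have h1 : HasFDerivAt u (fderiv ℝ u (x, t)) (x, t) :=
    (hu.differentiable (by simp) (x, t)).hasFDerivAt
  have h2 : HasDerivAt (fun y : ℝ => ((y, t) : ℝ × ℝ)) (1, 0) x :=
    (hasDerivAt_id x).prodMk (hasDerivAt_const x t)
  exact h1.comp_hasDerivAt x h2

lemma hasDerivAt_slice2 {u : ℝ × ℝ → ℝ} (hu : ContDiff ℝ (⊤ : ℕ∞) u) (x t : ℝ) :
    HasDerivAt (fun τ => u (x, τ)) (D2 u (x, t)) t := by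
  have h1 : HasFDerivAt u (fderiv ℝ u (x, t)) (x, t) :=
    (hu.differentiable (by simp) (x, t)).hasFDerivAt
  have h2 : HasDerivAt (fun τ : ℝ => ((x, τ) : ℝ × ℝ)) (0, 1) t :=
    (hasDerivAt_const t x).prodMk (hasDerivAt_id t)
  exact h1.comp_hasDerivAt t h2

lemma pdx_eq {u : ℝ × ℝ → ℝ} (hu : ContDiff ℝ (⊤ : ℕ∞) u) (x t : ℝ) :
    pdx u x t = D1 u (x, t) := (hasDerivAt_slice1 hu x t).deriv

lemma pdt_eq {u : ℝ × ℝ → ℝ} (hu : ContDiff ℝ (⊤ : ℕ∞) u) (x t : ℝ) :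
    pdt u x t = D2 u (x, t) := (hasDerivAt_slice2 hu x t).deriv

lemma pdxx_eq {u : ℝ × ℝ → ℝ} (hu : ContDiff ℝ (⊤ : ℕ∞) u) (x t : ℝ) :
    pdxx u x t = D1 (D1 u) (x, t) := by
  have : (fun y => pdx u y t) = fun y => D1 u (y, t) := funext fun y => pdx_eq hu y t
  rw [pdxx, this]
  exact (hasDerivAt_slice1 (contDiff_D1 hu) x t).deriv

lemma D2_D1 {u : ℝ × ℝ → ℝ} (hu : ContDiff ℝ (⊤ : ℕ∞) u) (p : ℝ × ℝ) :
    D2 (D1 u) p = D1 (D2 u) p := by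
  have hd : ∀ q, HasFDerivAt u (fderiv ℝ u q) q := fun q =>
    (hu.differentiable (by simp) q).hasFDerivAt
  have hff : ContDiff ℝ (⊤ : ℕ∞) (fderiv ℝ u) := hu.fderiv_right (by simp)
  have h2 : HasFDerivAt (fderiv ℝ u) (fderiv ℝ (fderiv ℝ u) p) p :=
    (hff.differentiable (by simp) p).hasFDerivAt
  have sym := second_derivative_symmetric hd h2
  have e1 : fderiv ℝ (D1 u) p = (fderiv ℝ (fderiv ℝ u) p).flip (1, 0) := by
    unfold D1
    rw [fderiv_clm_apply (hff.differentiable (by simp) p)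
      (differentiableAt_const _)]
    simp
  have e2 : fderiv ℝ (D2 u) p = (fderiv ℝ (fderiv ℝ u) p).flip (0, 1) := by
    unfold D2
    rw [fderiv_clm_apply (hff.differentiable (by simp) p)
      (differentiableAt_const _)]
    simp
  show fderiv ℝ (D1 u) p (0, 1) = fderiv ℝ (D2 u) p (1, 0)
  rw [e1, e2]
  simpa using sym (0, 1) (1, 0)

lemma pdxx_add {u v : ℝ × ℝ → ℝ} (hu : ContDiff ℝ (⊤ : ℕ∞) u) (hv : ContDiff ℝ (⊤ : ℕ∞) v) (x t : ℝ) :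
    pdxx (fun p => u p + v p) x t = D1 (D1 u) (x, t) + D1 (D1 v) (x, t) := by
  rw [pdxx_eq (hu.add hv)]
  have e : D1 (fun p => u p + v p) = fun p => D1 u p + D1 v p := by
    funext p
    unfold D1
    rw [fderiv_fun_add (hu.differentiable (by simp) p)
      (hv.differentiable (by simp) p)]
    simp
  rw [e]
  show fderiv ℝ (fun p => D1 u p + D1 v p) (x, t) (1, 0) = _
  rw [fderiv_fun_add ((contDiff_D1 hu).differentiable (by simp) (x, t))
    ((contDiff_D1 hv).differentiable (by simp) (x, t))]
  simp [D1]

noncomputable def Fint (Ca γ c B0 : ℝ) (φ : ℝ → ℝ) (h s : ℝ × ℝ → ℝ) (p : ℝ × ℝ) : ℝ :=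
  φ (h p) - B0 / (2 * Ca) * h p ^ 2 + 1 / (2 * Ca) * D1 h p ^ 2
    + c ^ 2 / (2 * γ) * D1 s p ^ 2 + 1 / Ca * (D1 h p * D1 s p - B0 * h p * s p)

noncomputable def Gint (Ca γ c B0 : ℝ) (φ : ℝ → ℝ) (h s : ℝ × ℝ → ℝ) (p : ℝ × ℝ) : ℝ :=
  (deriv φ (h p) * D2 h p - B0 / (2 * Ca) * (2 * h p ^ 1 * D2 h p)
    + 1 / (2 * Ca) * (2 * D1 h p ^ 1 * D1 (D2 h) p))
    + c ^ 2 / (2 * γ) * (2 * D1 s p ^ 1 * D1 (D2 s) p)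
    + 1 / Ca * (D1 (D2 h) p * D1 s p + D1 h p * D1 (D2 s) p
        - (B0 * D2 h p * s p + B0 * h p * D2 s p))

lemma hasDerivAt_Fint (Ca γ c B0 : ℝ) (φ : ℝ → ℝ) (hφ : ContDiff ℝ 2 φ)
    (h s : ℝ × ℝ → ℝ) (hh : ContDiff ℝ (⊤ : ℕ∞) h) (hs : ContDiff ℝ (⊤ : ℕ∞) s) (x τ : ℝ) :
    HasDerivAt (fun τ => Fint Ca γ c B0 φ h s (x, τ)) (Gint Ca γ c B0 φ h s (x, τ)) τ := by
  have Hh := hasDerivAt_slice2 hh x τ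
  have Hs := hasDerivAt_slice2 hs x τ
  have Hhx : HasDerivAt (fun τ => D1 h (x, τ)) (D1 (D2 h) (x, τ)) τ := by
    have := hasDerivAt_slice2 (contDiff_D1 hh) x τ
    rwa [D2_D1 hh] at this
  have Hsx : HasDerivAt (fun τ => D1 s (x, τ)) (D1 (D2 s) (x, τ)) τ := by
    have := hasDerivAt_slice2 (contDiff_D1 hs) x τ
    rwa [D2_D1 hs] at this
  have Hph : HasDerivAt (fun τ => φ (h (x, τ))) (deriv φ (h (x, τ)) * D2 h (x, τ)) τ :=
    ((hφ.differentiable (by simp) (h (x, τ))).hasDerivAt).comp τ Hh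
  have big := ((((Hph.sub ((Hh.pow 2).const_mul (B0 / (2 * Ca)))).add
        ((Hhx.pow 2).const_mul (1 / (2 * Ca)))).add
        ((Hsx.pow 2).const_mul (c ^ 2 / (2 * γ)))).add
        (((Hhx.mul Hsx).sub ((Hh.const_mul B0).mul Hs)).const_mul (1 / Ca)))
  refine big.congr_deriv ?_
  norm_num [Gint]

lemma continuous_Fint (Ca γ c B0 : ℝ) (φ : ℝ → ℝ) (hφ : ContDiff ℝ 2 φ)
    (h s : ℝ × ℝ → ℝ) (hh : ContDiff ℝ (⊤ : ℕ∞) h) (hs : ContDiff ℝ (⊤ : ℕ∞) s) :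
    Continuous (Fint Ca γ c B0 φ h s) := by
  have c1 := hφ.continuous.comp hh.continuous
  have c2 := hh.continuous
  have c3 := hs.continuous
  have c4 := (contDiff_D1 hh).continuous
  have c5 := (contDiff_D1 hs).continuous
  exact (((c1.sub (continuous_const.mul (c2.pow 2))).add
      (continuous_const.mul (c4.pow 2))).add
      (continuous_const.mul (c5.pow 2))).add
      (continuous_const.mul ((c4.mul c5).sub ((continuous_const.mul c2).mul c3)))

lemma continuous_Gint (Ca γ c B0 : ℝ) (φ : ℝ → ℝ) (hφ : ContDiff ℝ 2 φ)
    (h s : ℝ × ℝ → ℝ) (hh : ContDiff ℝ (⊤ : ℕ∞) h) (hs : ContDiff ℝ (⊤ : ℕ∞) s) :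
    Continuous (Gint Ca γ c B0 φ h s) := by
  have c1 := (hφ.continuous_deriv one_le_two).comp hh.continuous
  have c2 := hh.continuous
  have c3 := hs.continuous
  have c4 := (contDiff_D1 hh).continuous
  have c5 := (contDiff_D1 hs).continuous
  have c6 := (contDiff_D2 hh).continuous
  have c7 := (contDiff_D2 hs).continuous
  have c8 := (contDiff_D1 (contDiff_D2 hh)).continuous
  have c9 := (contDiff_D1 (contDiff_D2 hs)).continuous
  exact ((((c1.mul c6).sub (continuous_const.mul ((continuous_const.mul (c2.pow 1)).mul c6))).add
        (continuous_const.mul ((continuous_const.mul (c4.pow 1)).mul c8))).add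
        (continuous_const.mul ((continuous_const.mul (c5.pow 1)).mul c9))).add
        (continuous_const.mul (((c8.mul c5).add (c4.mul c9)).sub
          ((((continuous_const.mul c6)).mul c3).add ((continuous_const.mul c2).mul c7))))

/-- Energy-dissipation law for the thin-film flow over a flexible substrate with
external force `f`:
`dE/dt = -(1/3)∫ h³ μₓ² - (1/γ)∫ sₜ² + (1/γ)∫ f sₜ`. -/
theorem thin_film_energy_dissipation
    (L Ca γ c B0 : ℝ) (hL : 0 < L) (hCa : 0 < Ca) (hγ : 0 < γ)
    (φ : ℝ → ℝ) (hφ : ContDiff ℝ 2 φ)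
    (h s μ f : ℝ × ℝ → ℝ)
    (hh : ContDiff ℝ (⊤ : ℕ∞) h) (hs : ContDiff ℝ (⊤ : ℕ∞) s)
    (hμ : ContDiff ℝ (⊤ : ℕ∞) μ) (hf : ContDiff ℝ (⊤ : ℕ∞) f)
    (eq1 : ∀ t : ℝ, ∀ x ∈ Set.Icc (0:ℝ) L,
      pdt h x t = (1/3) * deriv (fun y => (h (y, t))^3 * pdx μ y t) x)
    (eq2 : ∀ t : ℝ, ∀ x ∈ Set.Icc (0:ℝ) L,
      μ (x, t) = deriv φ (h (x, t)) - (B0 / Ca) * (h (x, t) + s (x, t))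
        - (1 / Ca) * pdxx (fun p => h p + s p) x t)
    (eq3 : ∀ t : ℝ, ∀ x ∈ Set.Icc (0:ℝ) L,
      pdt s x t = c^2 * pdxx s x t + (γ / Ca) * (pdxx h x t + B0 * h (x, t)) + f (x, t))
    (bc : ∀ t : ℝ,
      pdx h 0 t = 0 ∧ pdx h L t = 0 ∧ pdx μ 0 t = 0 ∧ pdx μ L t = 0 ∧
      pdx s 0 t = 0 ∧ pdx s L t = 0) :
    ∀ t : ℝ, HasDerivAt (energy L Ca γ c B0 φ h s)
      (-(1/3) * (∫ x in (0:ℝ)..L, (h (x, t))^3 * (pdx μ x t)^2)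
        - (1/γ) * (∫ x in (0:ℝ)..L, (pdt s x t)^2)
        + (1/γ) * (∫ x in (0:ℝ)..L, f (x, t) * pdt s x t)) t := by
  intro t
  obtain ⟨bh0, bhL, bm0, bmL, bs0, bsL⟩ := bc t
  rw [pdx_eq hh] at bh0 bhL
  rw [pdx_eq hμ] at bm0 bmL
  rw [pdx_eq hs] at bs0 bsL
  have cFi := continuous_Fint Ca γ c B0 φ hφ h s hh hs
  have cG := continuous_Gint Ca γ c B0 φ hφ h s hh hs
  have cline : ∀ τ : ℝ, Continuous fun x : ℝ => ((x, τ) : ℝ × ℝ) := fun τ =>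
    continuous_id.prodMk continuous_const
  -- Step 1: rewrite the energy
  have enE : energy L Ca γ c B0 φ h s
      = fun τ => ∫ x in (0:ℝ)..L, Fint Ca γ c B0 φ h s (x, τ) := by
    funext τ
    unfold energy Fint
    simp only [pdx_eq hh, pdx_eq hs]
  -- Step 2: differentiate under the integral sign
  have hK : IsCompact ((Set.uIcc (0:ℝ) L) ×ˢ Metric.closedBall t 1) :=
    isCompact_uIcc.prod (isCompact_closedBall t 1)
  obtain ⟨M, hM⟩ := hK.exists_bound_of_continuousOn cG.continuousOn
  have main := (intervalIntegral.hasDerivAt_integral_of_dominated_loc_of_deriv_le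
      (F := fun τ x => Fint Ca γ c B0 φ h s (x, τ))
      (F' := fun τ x => Gint Ca γ c B0 φ h s (x, τ))
      (bound := fun _ => M) (a := 0) (b := L) (μ := volume) (x₀ := t) (s := Metric.ball t 1)
      (Metric.ball_mem_nhds t one_pos)
      (Filter.Eventually.of_forall fun τ =>
        (cFi.comp (cline τ)).aestronglyMeasurable)
      ((cFi.comp (cline t)).intervalIntegrable 0 L)
      (cG.comp (cline t)).aestronglyMeasurable
      (Filter.Eventually.of_forall fun x hx τ hτ =>
        hM (x, τ) (Set.mk_mem_prod (Set.uIoc_subset_uIcc hx) (Metric.ball_subset_closedBall hτ)))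
      intervalIntegrable_const
      (Filter.Eventually.of_forall fun x _ τ _ =>
        hasDerivAt_Fint Ca γ c B0 φ hφ h s hh hs x τ)).2
  rw [enE]
  -- Step 3: identify the integral of Gint with the claimed dissipation
  have key : (∫ x in (0:ℝ)..L, Gint Ca γ c B0 φ h s (x, t))
      = -(1/3) * (∫ x in (0:ℝ)..L, (h (x, t))^3 * (pdx μ x t)^2)
        - (1/γ) * (∫ x in (0:ℝ)..L, (pdt s x t)^2)
        + (1/γ) * (∫ x in (0:ℝ)..L, f (x, t) * pdt s x t) := by

    simp only [pdx_eq hμ, pdt_eq hs]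
    have q : ∀ (u : ℝ × ℝ → ℝ), Continuous u → Continuous fun x : ℝ => u (x, t) :=
      fun u hu => hu.comp (cline t)
    have c_h := q h hh.continuous
    have c_s := q s hs.continuous
    have c_m := q μ hμ.continuous
    have c_f := q f hf.continuous
    have c_hx := q _ (contDiff_D1 hh).continuous
    have c_sx := q _ (contDiff_D1 hs).continuous
    have c_mx := q _ (contDiff_D1 hμ).continuous
    have c_ht := q _ (contDiff_D2 hh).continuous
    have c_st := q _ (contDiff_D2 hs).continuous
    have c_hxx := q _ (contDiff_D1 (contDiff_D1 hh)).continuous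
    have c_sxx := q _ (contDiff_D1 (contDiff_D1 hs)).continuous
    have c_mxx := q _ (contDiff_D1 (contDiff_D1 hμ)).continuous
    have c_htx := q _ (contDiff_D1 (contDiff_D2 hh)).continuous
    have c_stx := q _ (contDiff_D1 (contDiff_D2 hs)).continuous
    set W : ℝ → ℝ := fun x =>
      1/Ca * (D1 h (x,t) * D2 h (x,t)) + c^2/γ * (D1 s (x,t) * D2 s (x,t))
      + 1/Ca * (D1 s (x,t) * D2 h (x,t)) + 1/Ca * (D1 h (x,t) * D2 s (x,t))
      + 1/3 * (μ (x,t) * ((h (x,t))^3 * D1 μ (x,t))) with hWdef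
    set W' : ℝ → ℝ := fun x =>
      1/Ca * (D1 (D1 h) (x,t) * D2 h (x,t) + D1 h (x,t) * D1 (D2 h) (x,t))
      + c^2/γ * (D1 (D1 s) (x,t) * D2 s (x,t) + D1 s (x,t) * D1 (D2 s) (x,t))
      + 1/Ca * (D1 (D1 s) (x,t) * D2 h (x,t) + D1 s (x,t) * D1 (D2 h) (x,t))
      + 1/Ca * (D1 (D1 h) (x,t) * D2 s (x,t) + D1 h (x,t) * D1 (D2 s) (x,t))
      + 1/3 * (D1 μ (x,t) * ((h (x,t))^3 * D1 μ (x,t))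
          + μ (x,t) * (3 * (h (x,t))^2 * D1 h (x,t) * D1 μ (x,t)
            + (h (x,t))^3 * D1 (D1 μ) (x,t))) with hW'def
    have hW : ∀ x : ℝ, HasDerivAt W (W' x) x := by
      intro x
      have big := (((((((hasDerivAt_slice1 (contDiff_D1 hh) x t).fun_mul
            (hasDerivAt_slice1 (contDiff_D2 hh) x t)).const_mul (1/Ca)).add
          (((hasDerivAt_slice1 (contDiff_D1 hs) x t).fun_mul
            (hasDerivAt_slice1 (contDiff_D2 hs) x t)).const_mul (c^2/γ))).add
          (((hasDerivAt_slice1 (contDiff_D1 hs) x t).fun_mul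
            (hasDerivAt_slice1 (contDiff_D2 hh) x t)).const_mul (1/Ca))).add
          (((hasDerivAt_slice1 (contDiff_D1 hh) x t).fun_mul
            (hasDerivAt_slice1 (contDiff_D2 hs) x t)).const_mul (1/Ca))).add
          (((hasDerivAt_slice1 hμ x t).fun_mul (((hasDerivAt_slice1 hh x t).fun_pow 3).fun_mul
            (hasDerivAt_slice1 (contDiff_D1 hμ) x t))).const_mul (1/3)))
      rw [hWdef, hW'def]
      refine big.congr_deriv ?_
      all_goals push_cast; ring
    have cW' : Continuous W' := by
      rw [hW'def]
      exact ((((continuous_const.mul ((c_hxx.mul c_ht).add (c_hx.mul c_htx))).add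
        (continuous_const.mul ((c_sxx.mul c_st).add (c_sx.mul c_stx)))).add
        (continuous_const.mul ((c_sxx.mul c_ht).add (c_sx.mul c_htx)))).add
        (continuous_const.mul ((c_hxx.mul c_st).add (c_hx.mul c_stx)))).add
        (continuous_const.mul ((c_mx.mul ((c_h.pow 3).mul c_mx)).add
          (c_m.mul ((((continuous_const.mul (c_h.pow 2)).mul c_hx).mul c_mx).add
            ((c_h.pow 3).mul c_mxx)))))
    have hFTC : (∫ x in (0:ℝ)..L, W' x) = W L - W 0 :=
      intervalIntegral.integral_eq_sub_of_hasDerivAt (fun x _ => hW x)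
        (cW'.intervalIntegrable 0 L)
    have hbd : W L - W 0 = 0 := by
      simp only [hWdef]
      rw [bhL, bsL, bmL, bh0, bs0, bm0]
      ring
    set Tg : ℝ → ℝ := fun x => -(1/3) * ((h (x,t))^3 * (D1 μ (x,t))^2)
      - (1/γ) * (D2 s (x,t))^2 + (1/γ) * (f (x,t) * D2 s (x,t)) with hTgdef
    have hpt : Set.EqOn (fun x => Gint Ca γ c B0 φ h s (x, t))
        (fun x => Tg x + W' x) (Set.uIcc 0 L) := by
      intro x hx
      rw [Set.uIcc_of_le hL.le] at hx
      have e1 := eq1 t x hx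
      have e2 := eq2 t x hx
      have e3 := eq3 t x hx
      rw [pdt_eq hh] at e1
      rw [show (fun y => (h (y, t))^3 * pdx μ y t) = fun y => (h (y, t))^3 * D1 μ (y, t)
        from funext fun y => by rw [pdx_eq hμ]] at e1
      have hv := ((hasDerivAt_slice1 hh x t).fun_pow 3).fun_mul (hasDerivAt_slice1 (contDiff_D1 hμ) x t)
      rw [hv.deriv] at e1
      rw [pdxx_add hh hs] at e2
      rw [pdt_eq hs, pdxx_eq hs, pdxx_eq hh] at e3
      simp only [hTgdef, hW'def, Gint]
      rw [e1, e3, e2]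
      push_cast
      field_simp
      ring
    have cA : Continuous fun x => (h (x,t))^3 * (D1 μ (x,t))^2 := (c_h.pow 3).mul (c_mx.pow 2)
    have cB : Continuous fun x => (D2 s (x,t))^2 := c_st.pow 2
    have cC : Continuous fun x => f (x,t) * D2 s (x,t) := c_f.mul c_st
    have iTg : IntervalIntegrable Tg volume 0 L := by
      rw [hTgdef]
      exact (((continuous_const.mul cA).sub (continuous_const.mul cB)).add
        (continuous_const.mul cC)).intervalIntegrable 0 L
    rw [intervalIntegral.integral_congr hpt,
      intervalIntegral.integral_add iTg (cW'.intervalIntegrable 0 L), hFTC, hbd, add_zero,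
      hTgdef]
    rw [intervalIntegral.integral_add
        (((continuous_const.fun_mul cA).fun_sub (continuous_const.fun_mul cB)).intervalIntegrable 0 L)
        ((continuous_const.fun_mul cC).intervalIntegrable 0 L),
      intervalIntegral.integral_sub ((continuous_const.fun_mul cA).intervalIntegrable 0 L)
        ((continuous_const.fun_mul cB).intervalIntegrable 0 L),
      intervalIntegral.integral_const_mul, intervalIntegral.integral_const_mul,
      intervalIntegral.integral_const_mul]

  rw [← key]
  exact main
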